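/- For any profiles x, x' in a polymatrix game and any player i, f_i((1−ε)x + εx') − f(x) ≤ ε(Df_i^δ(x, x') − f(x)) + Λ_i^δ(x, x', ε) − ε²·u_i(x' − x) − (1−ε)·max_j{f_j(x) − f_i(x)}. -/

import Mathlib

open Finset
open scoped Classical

noncomputable section

/-- maximum of `v` over a finset `S` (junk value `0` if `S` is empty). -/
noncomputable def maxOnFS {α : Type*} (S : Finset α) (v : α → ℝ) : ℝ :=
  if h : S.Nonempty then S.sup' h v else 0

/-- minimum of `v` over a finset `S` (junk value `0` if `S` is empty). -/
noncomputable def minOnFS {α : Type*} (S : Finset α) (v : α → ℝ) : ℝ :=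
  if h : S.Nonempty then S.inf' h v else 0

section Polymatrix

variable {n : ℕ} (m : Fin n → ℕ) (N : Fin n → Finset (Fin n))
  (A : ∀ i j : Fin n, Matrix (Fin (m i)) (Fin (m j)) ℝ)

/-- vector of pure-strategy payoffs of player `i` against profile `x`:
`u_i^s(x) = Σ_{j ∈ N(i)} A_ij x_j`. -/
def usVec (i : Fin n) (x : ∀ j, Fin (m j) → ℝ) : Fin (m i) → ℝ :=
  fun k => ∑ j ∈ N i, ∑ q, A i j k q * x j q

/-- payoff to player `i` from playing the (possibly formal) strategy `y`
against profile `x`: `u_i(y, x) = yᵀ u_i^s(x)`. -/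
def payTo (i : Fin n) (y : Fin (m i) → ℝ) (x : ∀ j, Fin (m j) → ℝ) : ℝ :=
  ∑ k, y k * usVec m N A i x k

/-- payoff of player `i` under profile `x`. -/
def payoff (i : Fin n) (x : ∀ j, Fin (m j) → ℝ) : ℝ := payTo m N A i (x i) x

/-- best-response payoff of player `i` against `x`. -/
def brp (i : Fin n) (x : ∀ j, Fin (m j) → ℝ) : ℝ := maxOnFS univ (usVec m N A i x)

/-- pure best responses of player `i` against `x`. -/
def brSet (i : Fin n) (x : ∀ j, Fin (m j) → ℝ) : Finset (Fin (m i)) :=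
  univ.filter fun k => ∀ l, usVec m N A i x l ≤ usVec m N A i x k

/-- `δ`-best responses of player `i` against `x`. -/
def brdSet (δ : ℝ) (i : Fin n) (x : ∀ j, Fin (m j) → ℝ) : Finset (Fin (m i)) :=
  univ.filter fun k => brp m N A i x - δ ≤ usVec m N A i x k

/-- regret of player `i` under `x`: `f_i(x)`. -/
def regret (i : Fin n) (x : ∀ j, Fin (m j) → ℝ) : ℝ :=
  brp m N A i x - payoff m N A i x

/-- maximum regret `f(x) = max_i f_i(x)`. -/
def maxRegret (x : ∀ j, Fin (m j) → ℝ) : ℝ := maxOnFS univ fun i => regret m N A i x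

/-- set of players with maximum regret `K(x)`. -/
def Kset (x : ∀ j, Fin (m j) → ℝ) : Finset (Fin n) :=
  univ.filter fun i => regret m N A i x = maxRegret m N A x

/-- `Df_i^δ(x, x')`. -/
def Dfd (δ : ℝ) (i : Fin n) (x x' : ∀ j, Fin (m j) → ℝ) : ℝ :=
  maxOnFS (brdSet m N A δ i x) (usVec m N A i x')
    - payTo m N A i (x i) x' - payTo m N A i (x' i) x + payTo m N A i (x i) x

/-- `Df^δ(x, x') = max_{i ∈ K(x)} Df_i^δ(x, x') - f(x)`. -/
def DfdAll (δ : ℝ) (x x' : ∀ j, Fin (m j) → ℝ) : ℝ :=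
  maxOnFS (Kset m N A x) (fun i => Dfd m N A δ i x x') - maxRegret m N A x

/-- `Df_i(x, x')` (with exact best responses). -/
def Dfbr (i : Fin n) (x x' : ∀ j, Fin (m j) → ℝ) : ℝ :=
  maxOnFS (brSet m N A i x) (usVec m N A i x')
    - payTo m N A i (x i) x' - payTo m N A i (x' i) x + payTo m N A i (x i) x

/-- the profile `(1-ε)x + εx'`. -/
def mix (x x' : ∀ j, Fin (m j) → ℝ) (ε : ℝ) : ∀ j, Fin (m j) → ℝ :=
  fun j => (1 - ε) • x j + ε • x' j

/-- `Λ_i^δ(x, x', ε)`; if the complement of the `δ`-best-response set is empty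
the inner maximum is `-∞`, i.e. `Λ_i^δ = 0`. -/
def Lamd (δ : ℝ) (i : Fin n) (x x' : ∀ j, Fin (m j) → ℝ) (ε : ℝ) : ℝ :=
  if _h : ((brdSet m N A δ i x)ᶜ).Nonempty then
    max 0 (maxOnFS (brdSet m N A δ i x)ᶜ (usVec m N A i (mix m x x' ε))
         - maxOnFS (brdSet m N A δ i x) (usVec m N A i (mix m x x' ε)))
  else 0

/-- `Λ_i(x, x', ε)` (with exact best responses). -/
def LamBr (i : Fin n) (x x' : ∀ j, Fin (m j) → ℝ) (ε : ℝ) : ℝ :=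
  if _h : ((brSet m N A i x)ᶜ).Nonempty then
    max 0 (maxOnFS (brSet m N A i x)ᶜ (usVec m N A i (mix m x x' ε))
         - maxOnFS (brSet m N A i x) (usVec m N A i (mix m x x' ε)))
  else 0

/-- `x` is a mixed strategy profile. -/
def isProfile (x : ∀ j, Fin (m j) → ℝ) : Prop :=
  ∀ j, x j ∈ stdSimplex ℝ (Fin (m j))

/-- the game is normalized: all pure-strategy payoffs of every player lie in
`[0,1]` against every mixed profile. -/
def normalized : Prop :=
  ∀ i (x : ∀ j, Fin (m j) → ℝ), isProfile m x →
    ∀ k, usVec m N A i x k ∈ Set.Icc (0:ℝ) 1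

/-! Payoffs are bilinear, so `u_i^s(x̄) = (1-ε) u_i^s(x) + ε u_i^s(x')` and `u_i(x̄_i, x̄)`
expands into the four cross terms `u_i(x_i, x)`, `u_i(x_i, x')`, `u_i(x'_i, x)`, `u_i(x'_i, x')`.
The best response to `x̄` exceeds the best response within the `δ`-best responses `B` to `x` by
at most `Λ_i^δ(x, x', ε)`, and on `B` the payoff against `x̄` is at most
`(1-ε) max_k (u_i^s(x))_k + ε max_{k∈B} (u_i^s(x'))_k`. Since
`max_j {f_j(x) - f_i(x)} = f(x) - f_i(x)`, the remaining comparison is an identity. -/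

section MaxOnFS

variable {α : Type*} {S : Finset α} {v : α → ℝ}

lemma le_maxOnFS {a : α} (h : a ∈ S) : v a ≤ maxOnFS S v := by
  rw [maxOnFS, dif_pos ⟨a, h⟩]
  exact le_sup' v h

lemma maxOnFS_le (hS : S.Nonempty) {c : ℝ} (h : ∀ a ∈ S, v a ≤ c) : maxOnFS S v ≤ c := by
  rw [maxOnFS, dif_pos hS]
  exact sup'_le hS v h

lemma maxOnFS_sub_const (hS : S.Nonempty) (c : ℝ) :
    maxOnFS S (fun a => v a - c) = maxOnFS S v - c := by
  refine le_antisymm (maxOnFS_le hS fun a ha => sub_le_sub_right (le_maxOnFS ha) c) ?_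
  rw [sub_le_iff_le_add]
  exact maxOnFS_le hS fun a ha =>
    sub_le_iff_le_add.1 (le_maxOnFS (v := fun a => v a - c) ha)

lemma maxOnFS_le_maxOnFS_univ [Fintype α] (hS : S.Nonempty) :
    maxOnFS S v ≤ maxOnFS univ v :=
  maxOnFS_le hS fun a _ => le_maxOnFS (mem_univ a)

lemma maxOnFS_univ_le_add_max_compl [Fintype α] [DecidableEq α] (hSc : Sᶜ.Nonempty) :
    maxOnFS univ v ≤ maxOnFS S v + max 0 (maxOnFS Sᶜ v - maxOnFS S v) := by
  refine maxOnFS_le (⟨hSc.choose, mem_univ _⟩) fun a _ => ?_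
  by_cases ha : a ∈ S
  · linarith [le_maxOnFS (v := v) ha, le_max_left 0 (maxOnFS Sᶜ v - maxOnFS S v)]
  · linarith [le_maxOnFS (v := v) (mem_compl.2 ha),
      le_max_right 0 (maxOnFS Sᶜ v - maxOnFS S v)]

end MaxOnFS

lemma usVec_mix (i : Fin n) (x x' : ∀ j, Fin (m j) → ℝ) (ε : ℝ) (k : Fin (m i)) :
    usVec m N A i (mix m x x' ε) k
      = (1 - ε) * usVec m N A i x k + ε * usVec m N A i x' k := by
  simp only [usVec, mix, Pi.add_apply, Pi.smul_apply, smul_eq_mul, mul_add,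
    sum_add_distrib, mul_sum]
  congr 1 <;> exact sum_congr rfl fun _ _ => sum_congr rfl fun _ _ => by ring

lemma payTo_mix_right (i : Fin n) (y : Fin (m i) → ℝ) (x x' : ∀ j, Fin (m j) → ℝ) (ε : ℝ) :
    payTo m N A i y (mix m x x' ε)
      = (1 - ε) * payTo m N A i y x + ε * payTo m N A i y x' := by
  simp only [payTo, usVec_mix, mul_add, sum_add_distrib, mul_sum]
  congr 1 <;> exact sum_congr rfl fun _ _ => by ring

lemma payTo_mix_left (i : Fin n) (x x' z : ∀ j, Fin (m j) → ℝ) (ε : ℝ) :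
    payTo m N A i (mix m x x' ε i) z
      = (1 - ε) * payTo m N A i (x i) z + ε * payTo m N A i (x' i) z := by
  simp only [payTo, mix, Pi.add_apply, Pi.smul_apply, smul_eq_mul, add_mul,
    sum_add_distrib, mul_sum]
  congr 1 <;> exact sum_congr rfl fun _ _ => by ring

lemma payoff_mix (i : Fin n) (x x' : ∀ j, Fin (m j) → ℝ) (ε : ℝ) :
    payoff m N A i (mix m x x' ε)
      = (1 - ε) ^ 2 * payTo m N A i (x i) x
        + ε * (1 - ε) * (payTo m N A i (x i) x' + payTo m N A i (x' i) x)
        + ε ^ 2 * payTo m N A i (x' i) x' := by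
  rw [payoff, payTo_mix_left, payTo_mix_right, payTo_mix_right]
  ring

lemma brdSet_nonempty {δ : ℝ} (hδ : 0 ≤ δ) {i : Fin n} (hm : 0 < m i)
    (x : ∀ j, Fin (m j) → ℝ) : (brdSet m N A δ i x).Nonempty := by
  obtain ⟨k, -, hk⟩ := exists_max_image univ (usVec m N A i x) ⟨⟨0, hm⟩, mem_univ _⟩
  have hbrp : brp m N A i x ≤ usVec m N A i x k := maxOnFS_le ⟨k, mem_univ k⟩ hk
  exact ⟨k, mem_filter.2 ⟨mem_univ k, by linarith⟩⟩

lemma brp_mix_le (δ : ℝ) (i : Fin n) (x x' : ∀ j, Fin (m j) → ℝ) (ε : ℝ) :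
    brp m N A i (mix m x x' ε)
      ≤ maxOnFS (brdSet m N A δ i x) (usVec m N A i (mix m x x' ε))
        + Lamd m N A δ i x x' ε := by
  rw [brp, Lamd]
  split_ifs with hc
  · exact maxOnFS_univ_le_add_max_compl hc
  · rw [(compl_eq_empty_iff _).1 (not_nonempty_iff_eq_empty.1 hc), add_zero]

lemma maxOnFS_usVec_mix_le {i : Fin n} {B : Finset (Fin (m i))} (hB : B.Nonempty)
    (x x' : ∀ j, Fin (m j) → ℝ) {ε : ℝ} (hε : ε ∈ Set.Icc (0 : ℝ) 1) :
    maxOnFS B (usVec m N A i (mix m x x' ε))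
      ≤ (1 - ε) * maxOnFS B (usVec m N A i x) + ε * maxOnFS B (usVec m N A i x') :=
  maxOnFS_le hB fun k hk => by
    rw [usVec_mix]
    exact add_le_add (mul_le_mul_of_nonneg_left (le_maxOnFS hk) (sub_nonneg.2 hε.2))
      (mul_le_mul_of_nonneg_left (le_maxOnFS hk) hε.1)

theorem stmt18 (hm : ∀ i, 0 < m i)
    (δ : ℝ) (hδ : 0 ≤ δ) (i : Fin n)
    (x x' : ∀ j, Fin (m j) → ℝ)
    (ε : ℝ) (hε : ε ∈ Set.Icc (0:ℝ) 1) :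
    regret m N A i (mix m x x' ε) - maxRegret m N A x
      ≤ ε * (Dfd m N A δ i x x' - maxRegret m N A x)
        + Lamd m N A δ i x x' ε
        - ε ^ 2 * (payTo m N A i (x' i) x' - payTo m N A i (x' i) x
                   - payTo m N A i (x i) x' + payTo m N A i (x i) x)
        - (1 - ε) * maxOnFS univ (fun j => regret m N A j x - regret m N A i x) := by
  have hB := brdSet_nonempty m N A hδ (hm i) x
  have hbrp_mix := brp_mix_le m N A δ i x x' ε
  have hmaxB_mix := maxOnFS_usVec_mix_le m N A hB x x' hε
  have hmaxB : (1 - ε) * maxOnFS (brdSet m N A δ i x) (usVec m N A i x)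
      ≤ (1 - ε) * brp m N A i x :=
    mul_le_mul_of_nonneg_left (maxOnFS_le_maxOnFS_univ hB) (sub_nonneg.2 hε.2)
  rw [maxOnFS_sub_const ⟨i, mem_univ i⟩, regret, payoff_mix]
  simp only [maxRegret, regret, Dfd, payoff]
  linarith

end Polymatrix
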